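/- Let A be a finite commutative ring, s a fixed element of A, e a random element of A drawn from some distribution ψ, a uniform over A and independent of e, and s' uniform over A independent of everything. Then the pair (a, a·s + e + a·s') is distributed as a sample (a, a·(s+s') + e) where s + s' is uniformly distributed over A; i.e., randomizing a fixed-secret sample yields a uniform-secret sample. -/

import Mathlib

/-!
Adding `a * s'` to the sample shifts the secret from `s` to `s + s'`, and a translate of a
uniform secret is again uniform, so `s + s'` may be replaced by a fresh uniform `t`; reordering
the independent draws then gives the right-hand side.
-/

namespace PMF

variable {α β : Type*} [Fintype α] [Nonempty α]

theorem map_uniformOfFintype_equiv (σ : α ≃ α) :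
    (uniformOfFintype α).map σ = uniformOfFintype α := by
  classical
  ext x
  simp only [map_apply, uniformOfFintype_apply]
  rw [σ.tsum_eq fun b => if x = b then _ else 0]
  simp

theorem bind_uniformOfFintype_comp_equiv (σ : α ≃ α) (f : α → PMF β) :
    (uniformOfFintype α).bind (f ∘ σ) = (uniformOfFintype α).bind f := by
  rw [← bind_map, map_uniformOfFintype_equiv]

end PMF

theorem stmt_16_general (A : Type*) [CommRing A] [Fintype A]
    (ψ : PMF A) (s : A) :
    ((PMF.uniformOfFintype A).bind fun a =>
      ψ.bind fun e =>
        (PMF.uniformOfFintype A).bind fun s' =>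
          PMF.pure (a, a * s + e + a * s'))
    = ((PMF.uniformOfFintype A).bind fun t =>
        (PMF.uniformOfFintype A).bind fun a =>
          ψ.bind fun e =>
            PMF.pure (a, a * t + e)) := by
  have shift_secret : ∀ a e : A,
      ((PMF.uniformOfFintype A).bind fun s' => PMF.pure (a, a * s + e + a * s'))
        = (PMF.uniformOfFintype A).bind fun t => PMF.pure (a, a * t + e) := fun a e => by
    rw [← PMF.bind_uniformOfFintype_comp_equiv (Equiv.addLeft s) fun t => PMF.pure (a, a * t + e)]
    congr 1 with s'
    rw [Function.comp_apply, Equiv.coe_addLeft, mul_add, add_right_comm]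
  have swap_noise_secret : ∀ a : A,
      (ψ.bind fun e => (PMF.uniformOfFintype A).bind fun t => PMF.pure (a, a * t + e))
        = (PMF.uniformOfFintype A).bind fun t => ψ.bind fun e => PMF.pure (a, a * t + e) :=
    fun a => PMF.bind_comm _ _ _
  simp_rw [shift_secret, swap_noise_secret]
  exact PMF.bind_comm _ _ _

/-- worst-case to average-case randomization of the secret: over a finite
commutative ring `A`, with `a` uniform, `e ← ψ`, and `s'` uniform, all independent,
the sample `(a, a·s + e + a·s')` is distributed as `(a, a·t + e)` where the secret
`t = s + s'` is uniform over `A`. -/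
theorem stmt_16 (A : Type*) [CommRing A] [Fintype A] [DecidableEq A]
    (ψ : PMF A) (s : A) :
    ((PMF.uniformOfFintype A).bind fun a =>
      ψ.bind fun e =>
        (PMF.uniformOfFintype A).bind fun s' =>
          PMF.pure (a, a * s + e + a * s'))
    = ((PMF.uniformOfFintype A).bind fun t =>
        (PMF.uniformOfFintype A).bind fun a =>
          ψ.bind fun e =>
            PMF.pure (a, a * t + e)) :=
  stmt_16_general A ψ s
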